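/- arXiv:2302.09440 — 2 statements merged into one kernel-verified Lean document; each statement's English description precedes it below -/
import Mathlib

section
/- Suppose for each integer i ≥ 0, a set B_i of arms satisfies Σ_{v ∈ B_i} Δ(v)·n(v) ≤ C·ln(T)·2^{i(1+p_z)}·c₀ for constants C, c₀ and each arm v ∈ B_i has Δ(v) ∈ (2^{-i-1}, 2^{-i}]. Then for any ρ ∈ (0,1], the total regret Σ_i Σ_{v ∈ B_i} Δ(v)·n(v), split at threshold ρ, is at most ρ·T + C'·ln(T)·(1/(2ρ))^{p_z+1} for some constant C'. Choosing ρ = Θ((ln T / T)^{1/(p_z+2)}) yields total regret O((ln T)^{1/(p_z+2)} · T^{(p_z+1)/(p_z+2)}). -/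
/-!
Arms with `Δ ≤ ρ` cost at most `ρ T` in total. Every other arm lies in exactly one dyadic shell
`2^{-i-1} < Δ ≤ 2^{-i}`, and that shell has `2^i < 1/ρ`; so the remaining regret is bounded by
a geometric sum of the shell bounds with ratio `2^{1+p_z} ≥ 2`, which is at most twice its last
term, of order `(1/ρ)^{p_z+1}`. The choice `ρ = (ln T / T)^{1/(p_z+2)}` balances the two terms.
-/

open Finset

lemma two_rpow_neg_natCast (i : ℕ) : (2 : ℝ) ^ (-(i : ℝ)) = ((2 : ℝ) ^ i)⁻¹ := by
  rw [Real.rpow_neg zero_le_two, Real.rpow_natCast]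

lemma two_rpow_neg_natCast_sub_one (i : ℕ) :
    (2 : ℝ) ^ (-(i : ℝ) - 1) = ((2 : ℝ) ^ (i + 1))⁻¹ := by
  rw [← two_rpow_neg_natCast]
  push_cast
  ring_nf

lemma dyadic_shell_iff {x : ℝ} (hx : 0 < x) (i : ℕ) :
    ((2 : ℝ) ^ (-(i : ℝ) - 1) < x ∧ x ≤ (2 : ℝ) ^ (-(i : ℝ))) ↔
      (2 : ℝ) ^ i ≤ x⁻¹ ∧ x⁻¹ < 2 ^ (i + 1) := by
  rw [two_rpow_neg_natCast, two_rpow_neg_natCast_sub_one, le_inv_comm₀ hx (by positivity),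
    inv_lt_comm₀ (by positivity) hx, and_comm]

lemma exists_dyadic_shell {x : ℝ} (hx₀ : 0 < x) (hx₁ : x ≤ 1) :
    ∃ i : ℕ, (2 : ℝ) ^ (-(i : ℝ) - 1) < x ∧ x ≤ (2 : ℝ) ^ (-(i : ℝ)) := by
  obtain ⟨i, hi⟩ := exists_nat_pow_near ((one_le_inv₀ hx₀).2 hx₁) one_lt_two
  exact ⟨i, (dyadic_shell_iff hx₀ i).2 hi⟩

lemma dyadic_shell_index_unique {x : ℝ} {i j : ℕ}
    (hi : (2 : ℝ) ^ (-(i : ℝ) - 1) < x ∧ x ≤ (2 : ℝ) ^ (-(i : ℝ)))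
    (hj : (2 : ℝ) ^ (-(j : ℝ) - 1) < x ∧ x ≤ (2 : ℝ) ^ (-(j : ℝ))) : i = j := by
  have hx : 0 < x := (Real.rpow_pos_of_pos two_pos _).trans hi.1
  rw [dyadic_shell_iff hx] at hi hj
  have hij : i < j + 1 := (pow_lt_pow_iff_right₀ one_lt_two).1 (hi.1.trans_lt hj.2)
  have hji : j < i + 1 := (pow_lt_pow_iff_right₀ one_lt_two).1 (hj.1.trans_lt hi.2)
  omega

lemma dyadic_shell_index_lt {x ρ : ℝ} {i M : ℕ} (hρ : 0 < ρ) (hρx : ρ < x)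
    (hM : ρ⁻¹ < 2 ^ (M + 1))
    (hi : (2 : ℝ) ^ (-(i : ℝ) - 1) < x ∧ x ≤ (2 : ℝ) ^ (-(i : ℝ))) : i < M + 1 := by
  have h2i : (2 : ℝ) ^ i ≤ x⁻¹ := ((dyadic_shell_iff (hρ.trans hρx) i).1 hi).1
  exact (pow_lt_pow_iff_right₀ one_lt_two).1 <| h2i.trans_lt <| (inv_strictAnti₀ hρ hρx).trans hM

lemma geom_sum_le_two_mul_pow {r : ℝ} (hr : 2 ≤ r) (M : ℕ) :
    ∑ i ∈ range (M + 1), r ^ i ≤ 2 * r ^ M := by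
  induction M with
  | zero => simp
  | succ M ih =>
    rw [sum_range_succ, pow_succ]
    nlinarith [pow_pos (zero_lt_two.trans_le hr) M]

lemma sum_filter_le_mul_le_mul_sum {α : Type*} (s : Finset α) (Δ n : α → ℝ) {ρ : ℝ}
    (hρ : 0 ≤ ρ) (hn : ∀ v ∈ s, 0 ≤ n v) :
    ∑ v ∈ s with Δ v ≤ ρ, Δ v * n v ≤ ρ * ∑ v ∈ s, n v :=
  calc ∑ v ∈ s with Δ v ≤ ρ, Δ v * n v
      ≤ ∑ v ∈ s with Δ v ≤ ρ, ρ * n v := by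
        refine sum_le_sum fun v hv => ?_
        rw [mem_filter] at hv
        exact mul_le_mul_of_nonneg_right hv.2 (hn v hv.1)
    _ = ρ * ∑ v ∈ s with Δ v ≤ ρ, n v := (mul_sum _ _ _).symm
    _ ≤ ρ * ∑ v ∈ s, n v :=
        mul_le_mul_of_nonneg_left (sum_le_sum_of_subset_of_nonneg (filter_subset _ _)
          fun v hv _ => hn v hv) hρ

lemma sum_filter_not_le_le_sum_dyadic_shells {α : Type*} [DecidableEq α] (s : Finset α)
    (Δ f : α → ℝ) {ρ : ℝ} {M : ℕ} (hρ : 0 < ρ) (hM : ρ⁻¹ < 2 ^ (M + 1))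
    (hΔ : ∀ v ∈ s, 0 < Δ v ∧ Δ v ≤ 1) (hf : ∀ v ∈ s, 0 ≤ f v) :
    ∑ v ∈ s with ¬ Δ v ≤ ρ, f v ≤ ∑ i ∈ range (M + 1),
      ∑ v ∈ s with (2 : ℝ) ^ (-(i : ℝ) - 1) < Δ v ∧ Δ v ≤ (2 : ℝ) ^ (-(i : ℝ)), f v := by
  rw [← sum_biUnion]
  · refine sum_le_sum_of_subset_of_nonneg (fun v hv => ?_) fun v hv _ => ?_
    · rw [mem_filter, not_le] at hv
      obtain ⟨i, hi⟩ := exists_dyadic_shell (hΔ v hv.1).1 (hΔ v hv.1).2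
      exact mem_biUnion.2 ⟨i, mem_range.2 (dyadic_shell_index_lt hρ hv.2 hM hi),
        mem_filter.2 ⟨hv.1, hi⟩⟩
    · obtain ⟨i, -, hvi⟩ := mem_biUnion.1 hv
      exact hf v (mem_filter.1 hvi).1
  · intro i _ j _ hij
    exact disjoint_filter.2 fun v _ hi hj => hij (dyadic_shell_index_unique hi hj)

lemma sum_mul_le_of_dyadic_shell_bounds {α : Type*} [DecidableEq α] (s : Finset α)
    (Δ n : α → ℝ) {K p N ρ : ℝ} (hK : 0 ≤ K) (hp : 0 ≤ p) (hρ : 0 < ρ) (hρ₁ : ρ ≤ 1)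
    (hΔ : ∀ v ∈ s, 0 < Δ v ∧ Δ v ≤ 1) (hn : ∀ v ∈ s, 0 ≤ n v) (hN : ∑ v ∈ s, n v ≤ N)
    (hshell : ∀ i : ℕ,
      ∑ v ∈ s with (2 : ℝ) ^ (-(i : ℝ) - 1) < Δ v ∧ Δ v ≤ (2 : ℝ) ^ (-(i : ℝ)), Δ v * n v ≤
        K * (2 : ℝ) ^ ((i : ℝ) * (1 + p))) :
    ∑ v ∈ s, Δ v * n v ≤ ρ * N + 2 * 2 ^ (p + 1) * K * (1 / (2 * ρ)) ^ (p + 1) := by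
  obtain ⟨M, hM_le, hM_lt⟩ := exists_nat_pow_near ((one_le_inv₀ hρ).2 hρ₁) one_lt_two
  set r : ℝ := 2 ^ (1 + p)
  have hr : 2 ≤ r := Real.self_le_rpow_of_one_le one_le_two (by linarith)
  have hshell_pow (i : ℕ) : (2 : ℝ) ^ ((i : ℝ) * (1 + p)) = r ^ i := by
    rw [mul_comm, Real.rpow_mul_natCast zero_le_two]
  have hrM : r ^ M ≤ 2 ^ (p + 1) * (1 / (2 * ρ)) ^ (p + 1) :=
    calc r ^ M = ((2 : ℝ) ^ M) ^ (p + 1) := by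
          rw [← hshell_pow, Real.rpow_natCast_mul zero_le_two, add_comm]
      _ ≤ ρ⁻¹ ^ (p + 1) := Real.rpow_le_rpow (by positivity) hM_le (by linarith)
      _ = 2 ^ (p + 1) * (1 / (2 * ρ)) ^ (p + 1) := by
          rw [← Real.mul_rpow zero_le_two (by positivity)]
          field_simp
  calc ∑ v ∈ s, Δ v * n v
      = ∑ v ∈ s with Δ v ≤ ρ, Δ v * n v + ∑ v ∈ s with ¬ Δ v ≤ ρ, Δ v * n v :=
        (sum_filter_add_sum_filter_not _ _ _).symm
    _ ≤ ρ * N + ∑ i ∈ range (M + 1), K * r ^ i := by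
        gcongr
        · exact (sum_filter_le_mul_le_mul_sum s Δ n hρ.le hn).trans (by gcongr)
        · refine (sum_filter_not_le_le_sum_dyadic_shells s Δ _ hρ hM_lt hΔ
            fun v hv => mul_nonneg (hΔ v hv).1.le (hn v hv)).trans (sum_le_sum fun i _ => ?_)
          exact (hshell i).trans_eq (by rw [hshell_pow])
    _ = ρ * N + K * ∑ i ∈ range (M + 1), r ^ i := by rw [mul_sum]
    _ ≤ ρ * N + K * (2 * (2 ^ (p + 1) * (1 / (2 * ρ)) ^ (p + 1))) := by
        gcongr
        exact (geom_sum_le_two_mul_pow hr M).trans (by gcongr)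
    _ = ρ * N + 2 * 2 ^ (p + 1) * K * (1 / (2 * ρ)) ^ (p + 1) := by ring

lemma le_of_forall_threshold_bound {x T L K p : ℝ} (hT : 0 < T) (hL : 0 < L) (hLT : L ≤ T)
    (hK : 0 ≤ K) (hp : 0 ≤ p)
    (h : ∀ ρ : ℝ, 0 < ρ → ρ ≤ 1 → x ≤ ρ * T + K * L * (1 / (2 * ρ)) ^ (p + 1)) :
    x ≤ (1 + K) * L ^ (1 / (p + 2)) * T ^ ((p + 1) / (p + 2)) := by
  have hαβ : 1 / (p + 2) + (p + 1) / (p + 2) = 1 := by field_simp; ring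
  have hαp : 1 / (p + 2) * (p + 1) = (p + 1) / (p + 2) := by field_simp
  set α : ℝ := 1 / (p + 2)
  set β : ℝ := (p + 1) / (p + 2)
  set ρ := (L / T) ^ α with hρ_def
  have hρ : 0 < ρ := by positivity
  have hρ₁ : ρ ≤ 1 := Real.rpow_le_one (by positivity) ((div_le_one hT).2 hLT) (by positivity)
  have hρT : ρ * T = L ^ α * T ^ β := by
    rw [hρ_def, Real.div_rpow hL.le hT.le, div_mul_eq_mul_div, div_eq_iff (by positivity),
      mul_assoc, ← Real.rpow_add hT, add_comm, hαβ, Real.rpow_one]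
  have hLρ : L * (1 / ρ) ^ (p + 1) = L ^ α * T ^ β := by
    rw [hρ_def, one_div, ← Real.rpow_neg (by positivity), ← Real.rpow_mul (by positivity),
      neg_mul, hαp, Real.rpow_neg (by positivity), Real.div_rpow hL.le hT.le, inv_div,
      mul_div_assoc', div_eq_iff (by positivity), mul_right_comm, ← Real.rpow_add hL,
      hαβ, Real.rpow_one]
  calc x ≤ ρ * T + K * L * (1 / (2 * ρ)) ^ (p + 1) := h ρ hρ hρ₁
    _ ≤ ρ * T + K * (L * (1 / ρ) ^ (p + 1)) := by
        rw [← mul_assoc]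
        gcongr
        linarith
    _ = (1 + K) * L ^ α * T ^ β := by rw [hρT, hLρ]; ring

/-- Regret decomposition over dyadic badness groups: if each group
`B_i = {v : 2^{-i-1} < Δ v ≤ 2^{-i}}` contributes at most `C ln T · 2^{i(1+p_z)} · c₀`,
then for every threshold `ρ ∈ (0,1]` the total regret is at most
`ρ T + C' ln T (1/(2ρ))^{p_z+1}`, and the total regret is
`O((ln T)^{1/(p_z+2)} T^{(p_z+1)/(p_z+2)})`. -/
theorem zooming_regret_decomposition (C c₀ pz : ℝ) (hC : 0 < C) (hc₀ : 0 < c₀) (hpz : 0 ≤ pz) :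
    ∃ C' : ℝ, 0 < C' ∧ ∃ C'' : ℝ, 0 < C'' ∧
      ∀ (T : ℝ) (S : Finset ℕ) (Δ n : ℕ → ℝ),
        2 ≤ T →
        (∀ v ∈ S, 0 < Δ v ∧ Δ v ≤ 1) →
        (∀ v ∈ S, 0 ≤ n v) →
        (∑ v ∈ S, n v) ≤ T →
        (∀ i : ℕ,
          ∑ v ∈ S.filter (fun v => (2 : ℝ) ^ (-(i : ℝ) - 1) < Δ v ∧ Δ v ≤ (2 : ℝ) ^ (-(i : ℝ))),
              Δ v * n v ≤ C * Real.log T * (2 : ℝ) ^ ((i : ℝ) * (1 + pz)) * c₀) →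
        (∀ ρ : ℝ, 0 < ρ → ρ ≤ 1 →
            ∑ v ∈ S, Δ v * n v ≤ ρ * T + C' * Real.log T * (1 / (2 * ρ)) ^ (pz + 1)) ∧
          ∑ v ∈ S, Δ v * n v ≤
            C'' * (Real.log T) ^ (1 / (pz + 2)) * T ^ ((pz + 1) / (pz + 2)) := by
  refine ⟨2 * 2 ^ (pz + 1) * (C * c₀), by positivity, 1 + 2 * 2 ^ (pz + 1) * (C * c₀),
    by positivity, fun T S Δ n hT hΔ hn hnT hshell => ?_⟩
  have hlogT : 0 < Real.log T := Real.log_pos (by linarith)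
  have hlogT_le : Real.log T ≤ T := (Real.log_le_sub_one_of_pos (by linarith)).trans (by linarith)
  have hthreshold (ρ : ℝ) (hρ : 0 < ρ) (hρ₁ : ρ ≤ 1) :
      ∑ v ∈ S, Δ v * n v ≤
        ρ * T + 2 * 2 ^ (pz + 1) * (C * c₀) * Real.log T * (1 / (2 * ρ)) ^ (pz + 1) :=
    (sum_mul_le_of_dyadic_shell_bounds S Δ n (K := C * c₀ * Real.log T) (by positivity) hpz hρ
      hρ₁ hΔ hn hnT fun i => (hshell i).trans_eq (by ring)).trans_eq (by ring)
  exact ⟨hthreshold, le_of_forall_threshold_bound (by linarith) hlogT hlogT_le (by positivity) hpz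
    hthreshold⟩
end

section
/- Under the switching environment with c(T) change points and restart epoch length H, the dynamic regret satisfies R_L(T) ≤ Õ(H·c(T) + (T/H)·H^{(p+1)/(p+2)}), and choosing H = (T/c(T))^{(p+2)/(p+3)} gives R_L(T) ≤ Õ(T^{(p+2)/(p+3)} · c(T)^{1/(p+3)}). -/
open Finset

/-- Dynamic regret under the switching environment with restarts: with at most `c` bad epochs
(each of regret at most `H`) and change-free epochs of regret at most `C H^{(p+1)/(p+2)}`,
the total regret is at most `H c + (T/H + 1) C H^{(p+1)/(p+2)}`; choosing
`H = (T/c)^{(p+2)/(p+3)}` gives total regret `O(T^{(p+2)/(p+3)} c^{1/(p+3)})`. -/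
theorem switching_restart_regret (C p : ℝ) (hC : 0 < C) (hp : 0 ≤ p) :
    ∃ C' : ℝ, 0 < C' ∧
      ∀ (T H c : ℝ) (m : ℕ) (r : ℕ → ℝ) (Bad : Finset ℕ),
        1 ≤ T → 0 < H → 1 ≤ c →
        m = Nat.ceil (T / H) →
        Bad ⊆ Finset.range m →
        (Bad.card : ℝ) ≤ c →
        (∀ j ∈ Finset.range m, 0 ≤ r j) →
        (∀ j ∈ Bad, r j ≤ H) →
        (∀ j ∈ Finset.range m \ Bad, r j ≤ C * H ^ ((p + 1) / (p + 2))) →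
        (∑ j ∈ Finset.range m, r j ≤ H * c + (T / H + 1) * C * H ^ ((p + 1) / (p + 2))) ∧
          (H = (T / c) ^ ((p + 2) / (p + 3)) →
            ∑ j ∈ Finset.range m, r j ≤ C' * T ^ ((p + 2) / (p + 3)) * c ^ (1 / (p + 3))) := by
  refine ⟨1 + 2 * C, by linarith, ?_⟩
  intro T H c m r Bad hT hH hc hm hsub hcard hr0 hbad hgood
  have hT0 : (0:ℝ) < T := by linarith
  have hc0 : (0:ℝ) < c := by linarith
  have hp2 : (0:ℝ) < p + 2 := by linarith
  have hp3 : (0:ℝ) < p + 3 := by linarith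
  have hHα : (0:ℝ) ≤ H ^ ((p + 1) / (p + 2)) := Real.rpow_nonneg hH.le _
  have hmle : (m : ℝ) ≤ T / H + 1 := by
    rw [hm]
    exact le_of_lt (Nat.ceil_lt_add_one (by positivity))
  have h2 : ∑ j ∈ Bad, r j ≤ H * c := by
    calc ∑ j ∈ Bad, r j ≤ ∑ _j ∈ Bad, H := Finset.sum_le_sum hbad
      _ = (Bad.card : ℝ) * H := by rw [Finset.sum_const, nsmul_eq_mul]
      _ ≤ c * H := mul_le_mul_of_nonneg_right hcard hH.le
      _ = H * c := mul_comm _ _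
  have h1 : ∑ j ∈ Finset.range m \ Bad, r j ≤ (T / H + 1) * (C * H ^ ((p + 1) / (p + 2))) := by
    calc ∑ j ∈ Finset.range m \ Bad, r j
        ≤ ∑ _j ∈ Finset.range m \ Bad, C * H ^ ((p + 1) / (p + 2)) :=
          Finset.sum_le_sum hgood
      _ = ((Finset.range m \ Bad).card : ℝ) * (C * H ^ ((p + 1) / (p + 2))) := by
          rw [Finset.sum_const, nsmul_eq_mul]
      _ ≤ (m : ℝ) * (C * H ^ ((p + 1) / (p + 2))) := by
          refine mul_le_mul_of_nonneg_right ?_ (by positivity)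
          exact_mod_cast le_trans (Finset.card_le_card Finset.sdiff_subset) (by simp)
      _ ≤ (T / H + 1) * (C * H ^ ((p + 1) / (p + 2))) :=
          mul_le_mul_of_nonneg_right hmle (by positivity)
  have hsum1 : ∑ j ∈ Finset.range m, r j
      ≤ H * c + (T / H + 1) * C * H ^ ((p + 1) / (p + 2)) := by
    rw [← Finset.sum_sdiff hsub]
    have : (T / H + 1) * C * H ^ ((p + 1) / (p + 2))
        = (T / H + 1) * (C * H ^ ((p + 1) / (p + 2))) := by ring
    linarith
  refine ⟨hsum1, ?_⟩
  intro hHdef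
  set α := (p + 1) / (p + 2) with hα
  set β := (p + 2) / (p + 3) with hβ
  set γ := (1:ℝ) / (p + 3) with hγ
  have hx : (0:ℝ) < T / c := div_pos hT0 hc0
  -- key exponent identities
  have e1 : 1 - β = γ := by rw [hβ, hγ]; field_simp; norm_num
  have e2 : β * α - β = -γ := by rw [hβ, hγ, hα]; field_simp; ring
  have e3 : 1 - γ = β := by rw [hβ, hγ]; field_simp; ring
  have hone_le_c : ∀ y : ℝ, 0 ≤ y → 1 ≤ c ^ y := fun y hy => by
    calc (1:ℝ) = c ^ (0:ℝ) := (Real.rpow_zero c).symm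
      _ ≤ c ^ y := Real.rpow_le_rpow_of_exponent_le hc hy
  have hβ0 : 0 ≤ β := div_nonneg (by linarith) (by linarith)
  have hγ0 : 0 ≤ γ := div_nonneg one_pos.le (by linarith)
  have hα1 : α ≤ 1 := by rw [hα, div_le_one hp2]; linarith
  have hα0 : 0 ≤ α := div_nonneg (by linarith) (by linarith)
  -- A : H * c = T^β * c^γ
  have hA : H * c = T ^ β * c ^ γ := by
    rw [hHdef, Real.div_rpow hT0.le hc0.le, ← e1, Real.rpow_sub hc0, Real.rpow_one]
    field_simp
  -- B : (T/H) * H^α = T^β * c^γ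
  have hB : (T / H) * H ^ α = T ^ β * c ^ γ := by
    rw [hHdef, ← Real.rpow_mul hx.le,
      show T / (T / c) ^ β * (T / c) ^ (β * α) = T * ((T / c) ^ (β * α) / (T / c) ^ β) from by
        ring,
      ← Real.rpow_sub hx, e2, Real.rpow_neg hx.le, Real.div_rpow hT0.le hc0.le, inv_div,
      show T * (c ^ γ / T ^ γ) = (T / T ^ γ) * c ^ γ from by ring]
    congr 1
    rw [← e3, Real.rpow_sub hT0, Real.rpow_one]
  -- C : H^α ≤ T^β * c^γ
  have hCineq : H ^ α ≤ T ^ β * c ^ γ := by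
    rw [hHdef, ← Real.rpow_mul hx.le, Real.div_rpow hT0.le hc0.le]
    calc T ^ (β * α) / c ^ (β * α) ≤ T ^ (β * α) :=
          div_le_self (Real.rpow_nonneg hT0.le _) (hone_le_c _ (mul_nonneg hβ0 hα0))
      _ ≤ T ^ β := Real.rpow_le_rpow_of_exponent_le hT
          (by nlinarith)
      _ ≤ T ^ β * c ^ γ := le_mul_of_one_le_right (Real.rpow_nonneg hT0.le _) (hone_le_c _ hγ0)
  have expand : H * c + (T / H + 1) * C * H ^ α
      = H * c + C * ((T / H) * H ^ α) + C * H ^ α := by ring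
  have : ∑ j ∈ Finset.range m, r j ≤ (1 + 2 * C) * (T ^ β * c ^ γ) := by
    calc ∑ j ∈ Finset.range m, r j ≤ H * c + (T / H + 1) * C * H ^ α := hsum1
      _ = H * c + C * ((T / H) * H ^ α) + C * H ^ α := expand
      _ ≤ T ^ β * c ^ γ + C * (T ^ β * c ^ γ) + C * (T ^ β * c ^ γ) := by
          rw [hA, hB]
          have := mul_le_mul_of_nonneg_left hCineq hC.le
          linarith
      _ = (1 + 2 * C) * (T ^ β * c ^ γ) := by ring
  calc ∑ j ∈ Finset.range m, r j ≤ (1 + 2 * C) * (T ^ β * c ^ γ) := this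
    _ = (1 + 2 * C) * T ^ β * c ^ γ := by ring
end
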